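/- arXiv:2106.00129 — 4 statements merged into one kernel-verified Lean document; each statement's English description precedes it below -/
import Mathlib

section
/- For γ > 0 and α ≥ 0, the 2×2 determinant with rows (sinh√γ, −∫₀¹(1−r)·sinh(√γ·r) dr) and (α·cosh√γ, −α·∫₀¹(1−r)·cosh(√γ·r) dr − 1) is nonzero. -/
/-!
Both integrals are elementary: with `s = √γ`,
`∫₀¹ (1 - r) cosh (s r) dr = (cosh s - 1) / s²` and `∫₀¹ (1 - r) sinh (s r) dr = (sinh s - s) / s²`,
so the determinant equals `α (sinh s - s cosh s) / s² - sinh s`. By the mean value theorem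
`sinh s = s cosh c < s cosh s` for some `0 < c < s`, so the first term is `≤ 0` and the second `< 0`.
-/

open Real intervalIntegral

namespace Real

theorem sinh_lt_mul_cosh {x : ℝ} (hx : 0 < x) : sinh x < x * cosh x := by
  obtain ⟨c, ⟨hc₀, hcx⟩, hslope⟩ := exists_hasDerivAt_eq_slope sinh cosh hx
    continuous_sinh.continuousOn fun c _ => hasDerivAt_sinh c
  have hcosh : cosh c < cosh x := cosh_lt_cosh.mpr <| by
    rwa [abs_of_pos hc₀, abs_of_pos hx]
  rw [sinh_zero, sub_zero, sub_zero, eq_div_iff hx.ne'] at hslope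
  nlinarith

theorem integral_one_sub_mul_cosh_mul {s : ℝ} (hs : s ≠ 0) :
    ∫ r in (0 : ℝ)..1, (1 - r) * cosh (s * r) = (cosh s - 1) / s ^ 2 := by
  have hderiv : ∀ r ∈ Set.uIcc (0 : ℝ) 1, HasDerivAt
      (fun x ↦ (1 - x) * sinh (s * x) / s + cosh (s * x) / s ^ 2)
      ((1 - r) * cosh (s * r)) r := by
    intro r _
    have hlin : HasDerivAt (fun x ↦ s * x) s r := by simpa using (hasDerivAt_id r).const_mul s
    have := ((((hasDerivAt_id r).const_sub 1).mul ((hasDerivAt_sinh _).comp r hlin)).div_const s).add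
      (((hasDerivAt_cosh _).comp r hlin).div_const (s ^ 2))
    refine this.congr_deriv ?_
    simp only [Function.comp_apply, id]
    field_simp
    ring
  rw [integral_eq_sub_of_hasDerivAt hderiv ((by fun_prop : Continuous _).intervalIntegrable 0 1)]
  field_simp
  simp

theorem integral_one_sub_mul_sinh_mul {s : ℝ} (hs : s ≠ 0) :
    ∫ r in (0 : ℝ)..1, (1 - r) * sinh (s * r) = (sinh s - s) / s ^ 2 := by
  have hderiv : ∀ r ∈ Set.uIcc (0 : ℝ) 1, HasDerivAt
      (fun x ↦ (1 - x) * cosh (s * x) / s + sinh (s * x) / s ^ 2)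
      ((1 - r) * sinh (s * r)) r := by
    intro r _
    have hlin : HasDerivAt (fun x ↦ s * x) s r := by simpa using (hasDerivAt_id r).const_mul s
    have := ((((hasDerivAt_id r).const_sub 1).mul ((hasDerivAt_cosh _).comp r hlin)).div_const s).add
      (((hasDerivAt_sinh _).comp r hlin).div_const (s ^ 2))
    refine this.congr_deriv ?_
    simp only [Function.comp_apply, id]
    field_simp
    ring
  rw [integral_eq_sub_of_hasDerivAt hderiv ((by fun_prop : Continuous _).intervalIntegrable 0 1)]
  field_simp
  simp

end Real

/-- The 2×2 determinant with rows
(sinh√γ, −∫₀¹(1−r)sinh(√γ r)dr) and (α cosh√γ, −α∫₀¹(1−r)cosh(√γ r)dr − 1)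
is nonzero for γ > 0, α ≥ 0. -/
theorem stmt_1 (γ α : ℝ) (hγ : 0 < γ) (hα : 0 ≤ α) :
    Real.sinh (Real.sqrt γ) *
        (-α * (∫ r in (0:ℝ)..1, (1 - r) * Real.cosh (Real.sqrt γ * r)) - 1)
      - (-(∫ r in (0:ℝ)..1, (1 - r) * Real.sinh (Real.sqrt γ * r))) *
        (α * Real.cosh (Real.sqrt γ)) ≠ 0 := by
  set s := √γ
  have hs : 0 < s := sqrt_pos.mpr hγ
  rw [integral_one_sub_mul_cosh_mul hs.ne', integral_one_sub_mul_sinh_mul hs.ne']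
  have hdet : sinh s * (-α * ((cosh s - 1) / s ^ 2) - 1) - -((sinh s - s) / s ^ 2) * (α * cosh s)
      = α * (sinh s - s * cosh s) / s ^ 2 - sinh s := by
    field_simp
    ring
  have hfirst : α * (sinh s - s * cosh s) / s ^ 2 ≤ 0 :=
    div_nonpos_of_nonpos_of_nonneg
      (mul_nonpos_of_nonneg_of_nonpos hα (sub_nonpos.mpr (sinh_lt_mul_cosh hs).le)) (sq_nonneg s)
  rw [hdet]
  linarith [sinh_pos_iff.mpr hs]
end

section
/- Let γ > 0 and μ > 0. If φ : [0,1] → ℝ is a C⁴ function satisfying φ⁽⁴⁾ − γφ'' = μ²φ on [0,1], φ(1) = φ''(1) = 0, and φ'(0) = φ''(0) = 0, then (φ⁽³⁾(1))² − (φ⁽³⁾(0))² = −μ²(φ'(1))². -/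
open Set

/-! The energy
`E = (φ⁽³⁾)² - γ (φ'')² - 2μ² φ φ'' + μ² (φ')²`
has derivative `2 φ⁽³⁾ (φ⁽⁴⁾ - γ φ'' - μ² φ)`, so it is constant along solutions of
`φ⁽⁴⁾ - γ φ'' = μ² φ`. The boundary conditions kill every term of `E(1)` except
`(φ⁽³⁾(1))² + μ² (φ'(1))²`, and every term of `E(0)` except `(φ⁽³⁾(0))²`. -/

theorem ContDiffOn.hasDerivWithinAt_iteratedDerivWithin {φ : ℝ → ℝ} {s : Set ℝ} {n k : ℕ}
    (hφ : ContDiffOn ℝ n φ s) (hs : UniqueDiffOn ℝ s) (hk : k < n) {x : ℝ} (hx : x ∈ s) :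
    HasDerivWithinAt (iteratedDerivWithin k φ s) (iteratedDerivWithin (k + 1) φ s x) s x := by
  rw [iteratedDerivWithin_succ]
  exact ((hφ.differentiableOn_iteratedDerivWithin (mod_cast hk) hs) x hx).hasDerivWithinAt

noncomputable def odeEnergy (γ μ : ℝ) (φ : ℝ → ℝ) (s : Set ℝ) (x : ℝ) : ℝ :=
  iteratedDerivWithin 3 φ s x ^ 2 - γ * iteratedDerivWithin 2 φ s x ^ 2
    - 2 * μ ^ 2 * (φ x * iteratedDerivWithin 2 φ s x) + μ ^ 2 * iteratedDerivWithin 1 φ s x ^ 2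

section

variable {γ μ : ℝ} {φ : ℝ → ℝ}

theorem hasDerivWithinAt_odeEnergy {s : Set ℝ} (hφ : ContDiffOn ℝ 4 φ s)
    (hs : UniqueDiffOn ℝ s) {x : ℝ} (hx : x ∈ s) :
    HasDerivWithinAt (odeEnergy γ μ φ s)
      (2 * iteratedDerivWithin 3 φ s x * (iteratedDerivWithin 4 φ s x
        - γ * iteratedDerivWithin 2 φ s x - μ ^ 2 * φ x)) s x := by
  have h0 : HasDerivWithinAt φ (iteratedDerivWithin 1 φ s x) s x := by
    simpa using hφ.hasDerivWithinAt_iteratedDerivWithin hs (k := 0) (by norm_num) hx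
  have h1 : HasDerivWithinAt _ (iteratedDerivWithin 2 φ s x) s x :=
    hφ.hasDerivWithinAt_iteratedDerivWithin hs (k := 1) (by norm_num) hx
  have h2 : HasDerivWithinAt _ (iteratedDerivWithin 3 φ s x) s x :=
    hφ.hasDerivWithinAt_iteratedDerivWithin hs (k := 2) (by norm_num) hx
  have h3 : HasDerivWithinAt _ (iteratedDerivWithin 4 φ s x) s x :=
    hφ.hasDerivWithinAt_iteratedDerivWithin hs (k := 3) (by norm_num) hx
  refine ((((h3.pow 2).sub ((h2.pow 2).const_mul γ)).sub
    ((h0.mul h2).const_mul (2 * μ ^ 2))).add ((h1.pow 2).const_mul (μ ^ 2))).congr_deriv ?_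
  push_cast
  ring

theorem odeEnergy_right_eq_left {a b : ℝ} (hab : a < b) (hφ : ContDiffOn ℝ 4 φ (Icc a b))
    (hode : ∀ x ∈ Icc a b, iteratedDerivWithin 4 φ (Icc a b) x
      - γ * iteratedDerivWithin 2 φ (Icc a b) x = μ ^ 2 * φ x) :
    odeEnergy γ μ φ (Icc a b) b = odeEnergy γ μ φ (Icc a b) a := by
  have hderiv : ∀ x ∈ Icc a b, HasDerivWithinAt (odeEnergy γ μ φ (Icc a b)) 0 (Icc a b) x :=
    fun x hx ↦ (hasDerivWithinAt_odeEnergy hφ (uniqueDiffOn_Icc hab) hx).congr_deriv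
      (by rw [sub_sub, ← hode x hx]; ring)
  refine constant_of_has_deriv_right_zero (fun x hx ↦ (hderiv x hx).continuousWithinAt)
    (fun x hx ↦ ?_) b (right_mem_Icc.2 hab.le)
  exact (hderiv x (Ico_subset_Icc_self hx)).mono_of_mem_nhdsWithin (Icc_mem_nhdsGE_of_mem hx)

end

theorem stmt_2_general (γ μ : ℝ) (φ : ℝ → ℝ)
    (hreg : ContDiffOn ℝ 4 φ (Icc 0 1))
    (hode : ∀ s ∈ Icc (0:ℝ) 1,
      iteratedDerivWithin 4 φ (Icc 0 1) s - γ * iteratedDerivWithin 2 φ (Icc 0 1) s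
        = μ ^ 2 * φ s)
    (hb1 : φ 1 = 0) (hb2 : iteratedDerivWithin 2 φ (Icc 0 1) 1 = 0)
    (hb3 : iteratedDerivWithin 1 φ (Icc 0 1) 0 = 0)
    (hb4 : iteratedDerivWithin 2 φ (Icc 0 1) 0 = 0) :
    (iteratedDerivWithin 3 φ (Icc 0 1) 1) ^ 2
        - (iteratedDerivWithin 3 φ (Icc 0 1) 0) ^ 2
      = -(μ ^ 2) * (iteratedDerivWithin 1 φ (Icc 0 1) 1) ^ 2 := by
  have henergy := odeEnergy_right_eq_left zero_lt_one hreg hode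
  simp only [odeEnergy, hb1, hb2, hb3, hb4] at henergy
  linarith

/-- Energy identity: if φ is C⁴ on [0,1], φ⁽⁴⁾ − γφ'' = μ²φ on [0,1],
φ(1) = φ''(1) = 0 and φ'(0) = φ''(0) = 0, then
(φ⁽³⁾(1))² − (φ⁽³⁾(0))² = −μ²(φ'(1))². -/
theorem stmt_2 (γ μ : ℝ) (hγ : 0 < γ) (hμ : 0 < μ) (φ : ℝ → ℝ)
    (hreg : ContDiffOn ℝ 4 φ (Icc 0 1))
    (hode : ∀ s ∈ Icc (0:ℝ) 1,
      iteratedDerivWithin 4 φ (Icc 0 1) s - γ * iteratedDerivWithin 2 φ (Icc 0 1) s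
        = μ ^ 2 * φ s)
    (hb1 : φ 1 = 0) (hb2 : iteratedDerivWithin 2 φ (Icc 0 1) 1 = 0)
    (hb3 : iteratedDerivWithin 1 φ (Icc 0 1) 0 = 0)
    (hb4 : iteratedDerivWithin 2 φ (Icc 0 1) 0 = 0) :
    (iteratedDerivWithin 3 φ (Icc 0 1) 1) ^ 2
        - (iteratedDerivWithin 3 φ (Icc 0 1) 0) ^ 2
      = -(μ ^ 2) * (iteratedDerivWithin 1 φ (Icc 0 1) 1) ^ 2 :=
  stmt_2_general γ μ φ hreg hode hb1 hb2 hb3 hb4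
end

section
/- Let γ > 0 and μ ≠ 0 real. Suppose φ : [0,1] → ℝ solves φ⁽⁴⁾ − γφ'' = μ²φ with φ(1) = φ''(1) = φ'(0) = φ''(0) = 0 and additionally φ⁽³⁾(0) = 0. Then φ ≡ 0. -/
open Set

/-!
Multiplying the equation by φ''' shows that
`E = (φ''')² - γ (φ'')² + μ² (φ')² - 2 μ² φ φ''` is a first integral. The boundary conditions make
`E(0) = 0` and `E(1) = (φ'''(1))² + μ² (φ'(1))²`, so `φ'''(1) = φ'(1) = 0` since `μ ≠ 0`. Then all
of `φ, φ', φ'', φ'''` vanish at `1`, and a Gronwall estimate for `φ² + φ'² + φ''² + φ'''²`,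
run backwards from `1`, shows that `φ` vanishes identically.
-/

theorem hasDerivWithinAt_iteratedDerivWithin {𝕜 F : Type*} [NontriviallyNormedField 𝕜]
    [NormedAddCommGroup F] [NormedSpace 𝕜 F] {f : 𝕜 → F} {s : Set 𝕜} {n i : ℕ}
    (hf : ContDiffOn 𝕜 n f s) (hs : UniqueDiffOn 𝕜 s) (hi : i < n) {x : 𝕜} (hx : x ∈ s) :
    HasDerivWithinAt (iteratedDerivWithin i f s) (iteratedDerivWithin (i + 1) f s x) s x := by
  rw [iteratedDerivWithin_succ]
  exact (hf.differentiableOn_iteratedDerivWithin (mod_cast hi) hs x hx).hasDerivWithinAt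

theorem eq_zero_of_neg_mul_le_deriv {G G' : ℝ → ℝ} {a b K : ℝ}
    (hG : ∀ x ∈ Icc a b, HasDerivWithinAt G (G' x) (Icc a b) x)
    (hG' : ∀ x ∈ Icc a b, -(K * G x) ≤ G' x) (hG_nonneg : ∀ x ∈ Icc a b, 0 ≤ G x)
    (hGb : G b = 0) : ∀ x ∈ Icc a b, G x = 0 := by
  have hH : ∀ x ∈ Icc a b, HasDerivWithinAt (fun x => G x * Real.exp (K * x))
      ((G' x + K * G x) * Real.exp (K * x)) (Icc a b) x := by
    intro x hx
    refine ((hG x hx).mul ((((hasDerivAt_id' x).const_mul K).exp).hasDerivWithinAt)).congr_deriv ?_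
    ring
  have hmono : MonotoneOn (fun x => G x * Real.exp (K * x)) (Icc a b) :=
    monotoneOn_of_hasDerivWithinAt_nonneg (convex_Icc a b)
      (fun x hx => (hH x hx).continuousWithinAt)
      (fun x hx => (hH x (interior_subset hx)).mono interior_subset)
      (fun x hx => mul_nonneg (by linarith [hG' x (interior_subset hx)]) (Real.exp_pos _).le)
  intro x hx
  have hle : G x * Real.exp (K * x) ≤ 0 := by
    simpa [hGb] using hmono hx (right_mem_Icc.2 (hx.1.trans hx.2)) hx.2
  exact le_antisymm (nonpos_of_mul_nonpos_left hle (Real.exp_pos _)) (hG_nonneg x hx)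

theorem neg_mul_sum_sq_le (γ μ p q r t : ℝ) :
    -((2 + |γ| + μ ^ 2) * (p ^ 2 + q ^ 2 + r ^ 2 + t ^ 2))
      ≤ 2 * (p * q + q * r + r * t + t * (γ * r + μ ^ 2 * p)) := by
  have hγ : -(|γ| * (r ^ 2 + t ^ 2)) ≤ 2 * γ * r * t := by
    rcases abs_cases γ with ⟨h, hγ⟩ | ⟨h, hγ⟩ <;> rw [h]
    · nlinarith [mul_nonneg hγ (sq_nonneg (r + t))]
    · nlinarith [mul_nonneg (neg_nonneg.2 hγ.le) (sq_nonneg (r - t))]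
  nlinarith [sq_nonneg (p + q), sq_nonneg (q + r), sq_nonneg (r + t), sq_nonneg p, sq_nonneg q,
    sq_nonneg r, mul_nonneg (sq_nonneg μ) (sq_nonneg (p + t)),
    mul_nonneg (abs_nonneg γ) (sq_nonneg p), mul_nonneg (abs_nonneg γ) (sq_nonneg q),
    mul_nonneg (sq_nonneg μ) (sq_nonneg q), mul_nonneg (sq_nonneg μ) (sq_nonneg r)]

section FourthOrder

variable {a b γ μ : ℝ} {φ : ℝ → ℝ}

noncomputable def fourthOrderEnergy (γ μ : ℝ) (φ : ℝ → ℝ) (s : Set ℝ) (x : ℝ) : ℝ :=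
  iteratedDerivWithin 3 φ s x ^ 2 - γ * iteratedDerivWithin 2 φ s x ^ 2
    + μ ^ 2 * iteratedDerivWithin 1 φ s x ^ 2 - 2 * μ ^ 2 * (φ x * iteratedDerivWithin 2 φ s x)

theorem hasDerivWithinAt_iteratedDerivWithin_Icc (hab : a < b)
    (hφ : ContDiffOn ℝ 4 φ (Icc a b)) {x : ℝ} (hx : x ∈ Icc a b) :
    HasDerivWithinAt φ (iteratedDerivWithin 1 φ (Icc a b) x) (Icc a b) x ∧
    HasDerivWithinAt (iteratedDerivWithin 1 φ (Icc a b))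
      (iteratedDerivWithin 2 φ (Icc a b) x) (Icc a b) x ∧
    HasDerivWithinAt (iteratedDerivWithin 2 φ (Icc a b))
      (iteratedDerivWithin 3 φ (Icc a b) x) (Icc a b) x ∧
    HasDerivWithinAt (iteratedDerivWithin 3 φ (Icc a b))
      (iteratedDerivWithin 4 φ (Icc a b) x) (Icc a b) x := by
  have hs := uniqueDiffOn_Icc hab
  refine ⟨?_, hasDerivWithinAt_iteratedDerivWithin hφ hs (by norm_num) hx,
    hasDerivWithinAt_iteratedDerivWithin hφ hs (by norm_num) hx,
    hasDerivWithinAt_iteratedDerivWithin hφ hs (by norm_num) hx⟩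
  simpa using hasDerivWithinAt_iteratedDerivWithin hφ hs (i := 0) (by norm_num) hx

theorem fourthOrderEnergy_right_eq_left (hab : a < b) (hφ : ContDiffOn ℝ 4 φ (Icc a b))
    (hode : ∀ x ∈ Icc a b, iteratedDerivWithin 4 φ (Icc a b) x
      - γ * iteratedDerivWithin 2 φ (Icc a b) x = μ ^ 2 * φ x) :
    fourthOrderEnergy γ μ φ (Icc a b) b = fourthOrderEnergy γ μ φ (Icc a b) a := by
  have hE : ∀ x ∈ Icc a b, HasDerivWithinAt (fourthOrderEnergy γ μ φ (Icc a b)) 0 (Icc a b) x := by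
    intro x hx
    obtain ⟨hd0, hd1, hd2, hd3⟩ := hasDerivWithinAt_iteratedDerivWithin_Icc hab hφ hx
    refine ((((hd3.pow 2).sub ((hd2.pow 2).const_mul γ)).add ((hd1.pow 2).const_mul (μ ^ 2))).sub
      ((hd0.mul hd2).const_mul (2 * μ ^ 2))).congr_deriv ?_
    linear_combination (2 * iteratedDerivWithin 3 φ (Icc a b) x) * hode x hx
  exact constant_of_has_deriv_right_zero (fun x hx => (hE x hx).continuousWithinAt)
    (fun x hx => (hE x (Ico_subset_Icc_self hx)).mono_of_mem_nhdsWithin (Icc_mem_nhdsGE_of_mem hx))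
    b (right_mem_Icc.2 hab.le)

theorem eqOn_zero_of_iteratedDerivWithin_eq_zero_right (hab : a < b)
    (hφ : ContDiffOn ℝ 4 φ (Icc a b))
    (hode : ∀ x ∈ Icc a b, iteratedDerivWithin 4 φ (Icc a b) x
      - γ * iteratedDerivWithin 2 φ (Icc a b) x = μ ^ 2 * φ x)
    (h0 : φ b = 0) (h1 : iteratedDerivWithin 1 φ (Icc a b) b = 0)
    (h2 : iteratedDerivWithin 2 φ (Icc a b) b = 0) (h3 : iteratedDerivWithin 3 φ (Icc a b) b = 0) :
    ∀ x ∈ Icc a b, φ x = 0 := by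
  set D : ℕ → ℝ → ℝ := fun i => iteratedDerivWithin i φ (Icc a b)
  have hG := eq_zero_of_neg_mul_le_deriv (K := 2 + |γ| + μ ^ 2)
    (G := fun x => φ x ^ 2 + D 1 x ^ 2 + D 2 x ^ 2 + D 3 x ^ 2)
    (G' := fun x => 2 * (φ x * D 1 x + D 1 x * D 2 x + D 2 x * D 3 x + D 3 x * D 4 x))
    (fun x hx => by
      obtain ⟨hd0, hd1, hd2, hd3⟩ := hasDerivWithinAt_iteratedDerivWithin_Icc hab hφ hx
      exact ((((hd0.pow 2).add (hd1.pow 2)).add (hd2.pow 2)).add (hd3.pow 2)).congr_deriv (by ring))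
    (fun x hx => by
      linear_combination neg_mul_sum_sq_le γ μ (φ x) (D 1 x) (D 2 x) (D 3 x)
        - 2 * D 3 x * hode x hx)
    (fun x _ => by positivity) (by simp [D, h0, h1, h2, h3])
  intro x hx
  nlinarith [hG x hx, sq_nonneg (D 1 x), sq_nonneg (D 2 x), sq_nonneg (D 3 x)]

end FourthOrder

theorem stmt_3_general (γ μ : ℝ) (hμ : μ ≠ 0) (φ : ℝ → ℝ)
    (hreg : ContDiffOn ℝ 4 φ (Icc 0 1))
    (hode : ∀ s ∈ Icc (0:ℝ) 1,
      iteratedDerivWithin 4 φ (Icc 0 1) s - γ * iteratedDerivWithin 2 φ (Icc 0 1) s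
        = μ ^ 2 * φ s)
    (hb1 : φ 1 = 0) (hb2 : iteratedDerivWithin 2 φ (Icc 0 1) 1 = 0)
    (hb3 : iteratedDerivWithin 1 φ (Icc 0 1) 0 = 0)
    (hb4 : iteratedDerivWithin 2 φ (Icc 0 1) 0 = 0)
    (hb5 : iteratedDerivWithin 3 φ (Icc 0 1) 0 = 0) :
    ∀ s ∈ Icc (0:ℝ) 1, φ s = 0 := by
  have hE := fourthOrderEnergy_right_eq_left zero_lt_one hreg hode
  simp only [fourthOrderEnergy, hb1, hb2, hb3, hb4, hb5] at hE
  have hsum : iteratedDerivWithin 3 φ (Icc 0 1) 1 ^ 2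
      + μ ^ 2 * iteratedDerivWithin 1 φ (Icc 0 1) 1 ^ 2 = 0 := by linarith
  obtain ⟨h3, h1⟩ := (add_eq_zero_iff_of_nonneg (sq_nonneg _) (by positivity)).1 hsum
  rw [mul_eq_zero, or_iff_right (pow_ne_zero 2 hμ)] at h1
  exact eqOn_zero_of_iteratedDerivWithin_eq_zero_right zero_lt_one hreg hode hb1
    (pow_eq_zero_iff two_ne_zero |>.1 h1) hb2 (pow_eq_zero_iff two_ne_zero |>.1 h3)

/-- If additionally φ⁽³⁾(0) = 0, then φ vanishes identically on [0,1]. -/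
theorem stmt_3 (γ μ : ℝ) (hγ : 0 < γ) (hμ : μ ≠ 0) (φ : ℝ → ℝ)
    (hreg : ContDiffOn ℝ 4 φ (Icc 0 1))
    (hode : ∀ s ∈ Icc (0:ℝ) 1,
      iteratedDerivWithin 4 φ (Icc 0 1) s - γ * iteratedDerivWithin 2 φ (Icc 0 1) s
        = μ ^ 2 * φ s)
    (hb1 : φ 1 = 0) (hb2 : iteratedDerivWithin 2 φ (Icc 0 1) 1 = 0)
    (hb3 : iteratedDerivWithin 1 φ (Icc 0 1) 0 = 0)
    (hb4 : iteratedDerivWithin 2 φ (Icc 0 1) 0 = 0)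
    (hb5 : iteratedDerivWithin 3 φ (Icc 0 1) 0 = 0) :
    ∀ s ∈ Icc (0:ℝ) 1, φ s = 0 :=
  stmt_3_general γ μ hμ φ hreg hode hb1 hb2 hb3 hb4 hb5
end

section
/- For ρ_n = (n + 1/4)π with n ∈ ℕ, sinh((i−1)ρ_n)/sinh((1+i)ρ_n) = i + O(e^{−2ρ_n}) as n → ∞; that is, |sinh((i−1)ρ_n) − i·sinh((1+i)ρ_n)| ≤ C·e^{−ρ_n} for a constant C and all large n. -/
open Complex

/-!
Since `2 ρₙ = π/2 + 2πn`, we have `exp (2 i ρₙ) = i`, i.e. `exp (-i ρₙ) = -i exp (i ρₙ)`.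
Expanding both hyperbolic sines into exponentials, the two terms of size `e^{ρₙ}` then cancel
and the remaining two coincide, so the difference is exactly `exp ((i - 1) ρₙ)`, of modulus `e^{-ρₙ}`.
-/

theorem Complex.sinh_I_sub_one_mul_sub_I_mul_sinh_one_add_I_mul {z : ℂ}
    (h : exp (2 * I * z) = I) :
    sinh ((I - 1) * z) - I * sinh ((1 + I) * z) = exp ((I - 1) * z) := by
  have hsq : exp (I * z) ^ 2 = I := by rw [sq, ← exp_add, ← two_mul, ← mul_assoc, h]
  have hinv : exp (I * z) * exp (-(I * z)) = 1 := by rw [← exp_add]; simp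
  have hneg : exp (-(I * z)) = -I * exp (I * z) := by
    linear_combination (I * exp (-(I * z))) * hsq - (I * exp (I * z)) * hinv
      + exp (-(I * z)) * I_sq
  rw [sinh, sinh, show (I - 1) * z = I * z + -z by ring, show (1 + I) * z = z + I * z by ring,
    neg_add, neg_add, neg_neg, exp_add, exp_add, exp_add, exp_add, hneg]
  linear_combination (-(exp (-z) * exp (I * z)) / 2) * I_sq

theorem Complex.exp_two_mul_I_mul_nat_add_one_fourth_mul_pi (n : ℕ) :
    exp (2 * I * (((n : ℝ) + 1 / 4) * Real.pi)) = I := by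
  have : 2 * I * (((n : ℝ) + 1 / 4) * Real.pi) = Real.pi / 2 * I + n * (2 * Real.pi * I) := by
    push_cast; ring
  rw [this, exp_periodic.nat_mul n, exp_pi_div_two_mul_I]

/-- For ρₙ = (n + 1/4)π, sinh((i−1)ρₙ)/sinh((1+i)ρₙ) = i + O(e^{−2ρₙ}); i.e.
|sinh((i−1)ρₙ) − i sinh((1+i)ρₙ)| ≤ C e^{−ρₙ} for large n. -/
theorem stmt_18 :
    ∃ C : ℝ, ∃ N : ℕ, ∀ n : ℕ, N ≤ n →
      ‖Complex.sinh ((I - 1) * (((n : ℝ) + 1 / 4) * Real.pi))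
          - I * Complex.sinh ((1 + I) * (((n : ℝ) + 1 / 4) * Real.pi))‖
        ≤ C * Real.exp (-(((n : ℝ) + 1 / 4) * Real.pi)) := by
  refine ⟨1, 0, fun n _ => le_of_eq ?_⟩
  rw [sinh_I_sub_one_mul_sub_I_mul_sinh_one_add_I_mul
      (exp_two_mul_I_mul_nat_add_one_fourth_mul_pi n), norm_exp, one_mul]
  simp
end
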